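/- Let n, M, N be natural numbers and σ, δ real numbers with 0 < σ < δ ≤ 1 and σ/2^(n+5) ≤ 3^(-N) ≤ σ/2^n ≤ 3^(-M) ≤ δ/2^n, and let y ∈ ℝ. Let L_N be the set of rationals a/3^N where a ∈ [0, 3^N) is an integer whose ternary expansion contains only digits 0 and 2, and A_n^y(σ) = {x ∈ ℝ : ‖2^n x − y‖ < σ}. Then |L_N ∩ A_n^y(σ)| ≤ c·|L_M ∩ A_n^y(2δ)| for some absolute constant c. -/

import Mathlib

/-- distance from `x` to the nearest integer -/
noncomputable def nint (x : ℝ) : ℝ := |x - round x|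

/-- `A_n^y(σ) = {x : ‖2^n x - y‖ < σ}` -/
def approxSet (n : ℕ) (y σ : ℝ) : Set ℝ := {x : ℝ | nint (2 ^ n * x - y) < σ}

/-- ternary digits of `a` are all `0` or `2` -/
def goodDigits (a : ℕ) : Prop := ∀ d ∈ Nat.digits 3 a, d ≠ 1

/-- left endpoints of the level-`N` intervals of the Cantor set -/
def leftEndpoints (N : ℕ) : Set ℝ :=
  {x : ℝ | ∃ a : ℕ, a < 3 ^ N ∧ goodDigits a ∧ x = (a : ℝ) / 3 ^ N}

/-- all endpoints of the level-`N` intervals of the Cantor set -/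
def endpoints (N : ℕ) : Set ℝ :=
  leftEndpoints N ∪ (fun x : ℝ => 1 - x) '' leftEndpoints N

/-!
Sending a numerator `a` of `L_N` to its parent `a / 3 ^ (N - M)` in `L_M` moves `a / 3 ^ N` by
less than `3 ^ (-M) ≤ δ / 2 ^ n`, so it maps `L_N ∩ A_n^y(σ)` into `L_M ∩ A_n^y(σ + δ)`.
A fibre consists of integers `a` in a window of length `3 ^ (N - M)` with `‖2 ^ n a / 3 ^ N - y‖ < σ`.
Sorted by the integer nearest to `2 ^ n a / 3 ^ N - y`, they fall into at most `4` classes, each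
inside an interval of length `2 σ 3 ^ N / 2 ^ n ≤ 64`; hence every fibre has at most `260` elements.
-/

open Finset

lemma nint_add_le (u v : ℝ) : nint (u + v) ≤ nint u + |v| :=
  calc |u + v - round (u + v)| ≤ |u + v - round u| := round_le _ _
    _ ≤ |u - round u| + |v| := by rw [add_sub_right_comm]; exact abs_add_le _ _

lemma mem_approxSet_of_abs_sub_le {n : ℕ} {y σ τ x x' : ℝ} (hx : x ∈ approxSet n y σ)
    (hx' : σ + 2 ^ n * |x' - x| ≤ τ) : x' ∈ approxSet n y τ := by
  change nint (2 ^ n * x - y) < σ at hx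
  have key := nint_add_le (2 ^ n * x - y) (2 ^ n * (x' - x))
  rw [abs_mul, abs_of_pos (by positivity : (0 : ℝ) < 2 ^ n)] at key
  calc nint (2 ^ n * x' - y) = nint (2 ^ n * x - y + 2 ^ n * (x' - x)) := by ring_nf
    _ < τ := by linarith

lemma Int.card_le_of_forall_mem_Icc (s : Finset ℤ) {u ℓ : ℝ} (hℓ : 0 ≤ ℓ)
    (hs : ∀ a ∈ s, u ≤ a ∧ (a : ℝ) ≤ u + ℓ) : (#s : ℝ) ≤ ℓ + 1 := by
  have hsub : s ⊆ Icc ⌈u⌉ ⌊u + ℓ⌋ := fun a ha => by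
    obtain ⟨h₁, h₂⟩ := hs a ha
    exact mem_Icc.2 ⟨Int.ceil_le.2 h₁, Int.le_floor.2 h₂⟩
  have hcard : (#(Icc ⌈u⌉ ⌊u + ℓ⌋) : ℤ) = ⌊u + ℓ⌋ + 1 - ⌈u⌉ := by
    rw [Int.card_Icc, Int.toNat_of_nonneg]
    linarith [Int.floor_mono (le_add_of_nonneg_right hℓ : u ≤ u + ℓ), Int.ceil_le_floor_add_one u]
  have hcard' : (#(Icc ⌈u⌉ ⌊u + ℓ⌋) : ℝ) = ⌊u + ℓ⌋ + 1 - ⌈u⌉ := by exact_mod_cast hcard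
  calc (#s : ℝ) ≤ #(Icc ⌈u⌉ ⌊u + ℓ⌋) := by exact_mod_cast card_le_card hsub
    _ ≤ ℓ + 1 := by rw [hcard']; linarith [Int.floor_le (u + ℓ), Int.le_ceil u]

lemma Int.card_le_of_forall_nint_lt (s : Finset ℤ) {t u ℓ y σ : ℝ} (ht : 0 < t) (hℓ : 0 ≤ ℓ)
    (hσ : 0 ≤ σ) (hs : ∀ a ∈ s, u ≤ a ∧ (a : ℝ) ≤ u + ℓ)
    (hnint : ∀ a ∈ s, nint (t * a - y) < σ) :
    (#s : ℝ) ≤ (t * ℓ + 2 * σ + 1) * (2 * σ / t + 1) := by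
  set r : ℤ → ℤ := fun a => round (t * a - y)
  have hclose : ∀ a ∈ s, -σ < t * a - y - r a ∧ t * a - y - r a < σ :=
    fun a ha => abs_lt.1 (hnint a ha)
  have hrounds : (#(s.image r) : ℝ) ≤ t * ℓ + 2 * σ + 1 := by
    refine Int.card_le_of_forall_mem_Icc _ (u := t * u - y - σ) (by positivity) ?_
    simp only [mem_image]
    rintro _ ⟨a, ha, rfl⟩
    obtain ⟨h₁, h₂⟩ := hclose a ha
    obtain ⟨h₃, h₄⟩ := hs a ha
    constructor <;> nlinarith
  have hfibre : ∀ k ∈ s.image r, (#{a ∈ s | r a = k} : ℝ) ≤ 2 * σ / t + 1 := by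
    intro k _
    refine Int.card_le_of_forall_mem_Icc _ (u := (y + k - σ) / t) (by positivity) ?_
    intro a ha
    obtain ⟨has, rfl⟩ := mem_filter.1 ha
    obtain ⟨h₁, h₂⟩ := hclose a has
    rw [← add_div, div_le_iff₀ ht, le_div_iff₀ ht]
    constructor <;> linarith
  calc (#s : ℝ) = ∑ k ∈ s.image r, (#{a ∈ s | r a = k} : ℝ) := by
        exact_mod_cast card_eq_sum_card_image r s
    _ ≤ #(s.image r) * (2 * σ / t + 1) :=
        (sum_le_card_nsmul _ _ _ hfibre).trans_eq (nsmul_eq_mul _ _)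
    _ ≤ (t * ℓ + 2 * σ + 1) * (2 * σ / t + 1) :=
        mul_le_mul_of_nonneg_right hrounds (by positivity)

lemma goodDigits_div_three {a : ℕ} (h : goodDigits a) : goodDigits (a / 3) := by
  rcases Nat.eq_zero_or_pos a with rfl | ha
  · exact h
  · intro d hd
    exact h d (by rw [Nat.digits_def' (by norm_num) ha]; exact List.mem_cons_of_mem _ hd)

lemma goodDigits_div_pow {a : ℕ} (h : goodDigits a) (k : ℕ) : goodDigits (a / 3 ^ k) := by
  induction k with
  | zero => simpa using h
  | succ k ih => rw [pow_succ, ← Nat.div_div_eq_div_mul]; exact goodDigits_div_three ih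

open Classical in
noncomputable def leftEndpointNumerators (N : ℕ) (A : Set ℝ) : Finset ℕ :=
  {a ∈ range (3 ^ N) | goodDigits a ∧ (a : ℝ) / 3 ^ N ∈ A}

lemma ncard_leftEndpoints_inter (N : ℕ) (A : Set ℝ) :
    (leftEndpoints N ∩ A).ncard = #(leftEndpointNumerators N A) := by
  have himage : leftEndpoints N ∩ A =
      (fun a : ℕ => (a : ℝ) / 3 ^ N) '' ↑(leftEndpointNumerators N A) := by
    ext x
    simp only [leftEndpoints, leftEndpointNumerators, Set.mem_inter_iff, Set.mem_ofPred_eq,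
      Set.mem_image, coe_filter, mem_range]
    constructor
    · rintro ⟨⟨a, ha, hgood, rfl⟩, hA⟩
      exact ⟨a, ⟨ha, hgood, hA⟩, rfl⟩
    · rintro ⟨a, ⟨ha, hgood, hA⟩, rfl⟩
      exact ⟨⟨a, ha, hgood, rfl⟩, hA⟩
  have hinj : Function.Injective fun a : ℕ => (a : ℝ) / 3 ^ N := fun a b hab => by
    exact_mod_cast (div_left_inj' (by positivity : (3 : ℝ) ^ N ≠ 0)).1 hab
  rw [himage, Set.ncard_image_of_injective _ hinj, Set.ncard_coe_finset]

lemma abs_natCast_div_sub_div_le (a q : ℕ) : |((a / q : ℕ) : ℝ) - a / q| ≤ 1 := by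
  rw [← Nat.floor_div_eq_div (K := ℝ), abs_le]
  constructor <;> linarith [Nat.floor_le (by positivity : (0 : ℝ) ≤ a / q),
    Nat.lt_floor_add_one ((a : ℝ) / q)]

lemma div_pow_mem_leftEndpointNumerators {n M N a : ℕ} {y σ τ : ℝ} (hMN : M ≤ N)
    (hτ : σ + 2 ^ n / 3 ^ M ≤ τ) (ha : a ∈ leftEndpointNumerators N (approxSet n y σ)) :
    a / 3 ^ (N - M) ∈ leftEndpointNumerators M (approxSet n y τ) := by
  obtain ⟨k, rfl⟩ := Nat.exists_eq_add_of_le hMN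
  rw [Nat.add_sub_cancel_left]
  simp only [leftEndpointNumerators, mem_filter, mem_range] at ha ⊢
  obtain ⟨ha, hgood, hA⟩ := ha
  refine ⟨Nat.div_lt_of_lt_mul (by rwa [← pow_add, add_comm]), goodDigits_div_pow hgood k,
    mem_approxSet_of_abs_sub_le hA ?_⟩
  have hdist : |((a / 3 ^ k : ℕ) : ℝ) / 3 ^ M - a / 3 ^ (M + k)| ≤ 1 / 3 ^ M := by
    rw [pow_add, mul_comm, ← div_div, ← sub_div, abs_div,
      abs_of_pos (by positivity : (0 : ℝ) < 3 ^ M)]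
    gcongr
    exact_mod_cast abs_natCast_div_sub_div_le a (3 ^ k)
  calc σ + 2 ^ n * |((a / 3 ^ k : ℕ) : ℝ) / 3 ^ M - a / 3 ^ (M + k)|
      ≤ σ + 2 ^ n * (1 / 3 ^ M) := by gcongr
    _ ≤ τ := by rwa [mul_one_div]

lemma card_filter_div_pow_eq_le {n M N : ℕ} {y σ : ℝ} (hσ : 0 ≤ σ) (hMN : M ≤ N) (c : ℕ) :
    (#{a ∈ leftEndpointNumerators N (approxSet n y σ) | a / 3 ^ (N - M) = c} : ℝ) ≤
      (2 ^ n / 3 ^ M + 2 * σ + 1) * (2 * σ * 3 ^ N / 2 ^ n + 1) := by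
  obtain ⟨k, rfl⟩ := Nat.exists_eq_add_of_le hMN
  rw [Nat.add_sub_cancel_left]
  set F := {a ∈ leftEndpointNumerators (M + k) (approxSet n y σ) | a / 3 ^ k = c}
  have hbound := Int.card_le_of_forall_nint_lt (F.map Nat.castEmbedding)
    (t := 2 ^ n / 3 ^ (M + k)) (u := c * 3 ^ k) (ℓ := 3 ^ k) (y := y) (σ := σ)
    (by positivity) (by positivity) hσ ?_ ?_
  · rw [card_map] at hbound
    convert hbound using 3
    · rw [pow_add]; field_simp
    · field_simp
  all_goals
    simp only [F, leftEndpointNumerators, mem_map, mem_filter, mem_range, Nat.castEmbedding_apply]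
    rintro _ ⟨a, ⟨⟨-, -, hA⟩, rfl⟩, rfl⟩
  · have hlo : a / 3 ^ k * 3 ^ k ≤ a := Nat.div_mul_le_self a _
    have hhi : a < 3 ^ k * (a / 3 ^ k + 1) := Nat.lt_mul_div_succ a (by positivity)
    rw [Int.cast_natCast]
    constructor
    · exact_mod_cast hlo
    · exact_mod_cast (by linarith : a ≤ a / 3 ^ k * 3 ^ k + 3 ^ k)
  · change nint (2 ^ n * (a / 3 ^ (M + k)) - y) < σ at hA
    convert hA using 3
    push_cast
    ring

theorem stmt1 :
    ∃ c : ℝ, 0 < c ∧ ∀ (n M N : ℕ) (σ δ y : ℝ),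
      0 < σ → σ < δ → δ ≤ 1 →
      σ / 2 ^ (n + 5) ≤ 3 ^ (-(N : ℤ)) →
      (3 : ℝ) ^ (-(N : ℤ)) ≤ σ / 2 ^ n →
      σ / 2 ^ n ≤ 3 ^ (-(M : ℤ)) →
      (3 : ℝ) ^ (-(M : ℤ)) ≤ δ / 2 ^ n →
      ((leftEndpoints N ∩ approxSet n y σ).ncard : ℝ) ≤
        c * (leftEndpoints M ∩ approxSet n y (2 * δ)).ncard := by
  refine ⟨260, by norm_num, fun n M N σ δ y hσ hσδ hδ h1 h2 h3 h4 => ?_⟩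
  simp only [zpow_neg, zpow_natCast] at h1 h2 h3 h4
  have hMN : M ≤ N := by
    have h := h2.trans h3
    rwa [inv_le_inv₀ (by positivity) (by positivity),
      pow_le_pow_iff_right₀ (by norm_num : (1 : ℝ) < 3)] at h
  have hparent : (2 : ℝ) ^ n / 3 ^ M ≤ δ :=
    calc (2 : ℝ) ^ n / 3 ^ M = 2 ^ n * (3 ^ M)⁻¹ := div_eq_mul_inv _ _
      _ ≤ 2 ^ n * (δ / 2 ^ n) := by gcongr
      _ = δ := by field_simp
  have hscale : 2 * σ * 3 ^ N / 2 ^ n ≤ 64 :=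
    calc 2 * σ * 3 ^ N / 2 ^ n = 64 * (σ / 2 ^ (n + 5)) * 3 ^ N := by
          rw [pow_add]; field_simp; ring
      _ ≤ 64 * (3 ^ N)⁻¹ * 3 ^ N := by gcongr
      _ = 64 := by field_simp
  have hfibre (c : ℕ) :
      #{a ∈ leftEndpointNumerators N (approxSet n y σ) | a / 3 ^ (N - M) = c} ≤ 260 := by
    have h := card_filter_div_pow_eq_le (n := n) (y := y) hσ.le hMN c
    have hprod : (2 ^ n / 3 ^ M + 2 * σ + 1) * (2 * σ * 3 ^ N / 2 ^ n + 1) ≤ (4 : ℝ) * 65 := by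
      gcongr <;> linarith
    exact_mod_cast h.trans (hprod.trans (by norm_num : (4 : ℝ) * 65 ≤ 260))
  rw [ncard_leftEndpoints_inter, ncard_leftEndpoints_inter]
  exact_mod_cast card_le_mul_card_image_of_maps_to
    (fun a ha => div_pow_mem_leftEndpointNumerators hMN (by linarith) ha) 260 fun c _ => hfibre c
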